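/- arXiv:math/0205178 — 7 statements merged into one kernel-verified Lean document; each statement's English description precedes it below -/
import Mathlib

section
/- For each n ≥ 0, the Yablonskii-Vorob'ev polynomial T_n(x) is monic of degree n(n+1)/2. -/
open Polynomial

lemma yv_rhs_monic (p : Polynomial ℤ) (hp : p.Monic) (d : ℕ) (hd : p.natDegree = d)
    (hd1 : 1 ≤ d) :
    (X * p ^ 2 + p * derivative (derivative p) - (derivative p) ^ 2).Monic ∧
      (X * p ^ 2 + p * derivative (derivative p) - (derivative p) ^ 2).natDegree = 2 * d + 1 := by
  have hmain : (X * p ^ 2).Monic := by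
    simpa using (monic_X.mul (hp.pow 2))
  have hdeg_main : (X * p ^ 2).natDegree = 2 * d + 1 := by
    rw [natDegree_mul X_ne_zero (pow_ne_zero 2 hp.ne_zero), natDegree_X, natDegree_pow, hd]
    ring
  set q : Polynomial ℤ := p * derivative (derivative p) - (derivative p) ^ 2 with hq
  have hq1 : (p * derivative (derivative p)).natDegree ≤ 2 * d := by
    calc (p * derivative (derivative p)).natDegree
        ≤ p.natDegree + (derivative (derivative p)).natDegree := natDegree_mul_le
      _ ≤ d + ((d - 1) - 1) := by
          gcongr
          · exact hd.le
          · calc (derivative (derivative p)).natDegree ≤ (derivative p).natDegree - 1 :=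
                natDegree_derivative_le _
              _ ≤ (d - 1) - 1 := by
                  gcongr
                  simpa [hd] using natDegree_derivative_le p
      _ ≤ 2 * d := by omega
  have hq2 : ((derivative p) ^ 2).natDegree ≤ 2 * d := by
    calc ((derivative p) ^ 2).natDegree ≤ 2 * (derivative p).natDegree := natDegree_pow_le
      _ ≤ 2 * (d - 1) := by
          gcongr
          simpa [hd] using natDegree_derivative_le p
      _ ≤ 2 * d := by omega
  have hqdeg : q.natDegree ≤ 2 * d := by
    exact le_trans (natDegree_sub_le _ _)
      (by omega : max (p * derivative (derivative p)).natDegree ((derivative p) ^ 2).natDegree ≤ 2 * d)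
  have hlt : q.degree < (X * p ^ 2).degree := by
    rcases eq_or_ne q 0 with h | h
    · rw [h, degree_zero]
      exact WithBot.bot_lt_iff_ne_bot.2 (degree_eq_natDegree hmain.ne_zero ▸ WithBot.coe_ne_bot)
    · rw [degree_eq_natDegree h, degree_eq_natDegree hmain.ne_zero, hdeg_main]
      exact_mod_cast lt_of_le_of_lt hqdeg (by omega)
  have heq : X * p ^ 2 + p * derivative (derivative p) - (derivative p) ^ 2 = X * p ^ 2 + q := by
    rw [hq]; ring
  rw [heq]
  constructor
  · exact hmain.add_of_left hlt
  · rw [natDegree_add_eq_left_of_degree_lt hlt, hdeg_main]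

theorem yv_monic_degree (T : ℕ → Polynomial ℤ)
    (h0 : T 0 = 1) (h1 : T 1 = X)
    (hrec : ∀ n : ℕ, T (n + 2) * T n =
      X * T (n + 1) ^ 2 + T (n + 1) * derivative (derivative (T (n + 1)))
        - (derivative (T (n + 1))) ^ 2) :
    ∀ n : ℕ, (T n).Monic ∧ (T n).natDegree = n * (n + 1) / 2 := by
  have key : ∀ n : ℕ, ((T n).Monic ∧ (T n).natDegree = n * (n + 1) / 2) ∧
      ((T (n + 1)).Monic ∧ (T (n + 1)).natDegree = (n + 1) * (n + 2) / 2) := by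
    intro n
    induction n with
    | zero => exact ⟨⟨by rw [h0]; exact monic_one, by simp [h0]⟩,
        ⟨by rw [h1]; exact monic_X, by simp [h1]⟩⟩
    | succ m ih =>
      obtain ⟨⟨hm, hmd⟩, hm1, hm1d⟩ := ih
      refine ⟨⟨hm1, hm1d⟩, ?_⟩
      set d : ℕ := (m + 1) * (m + 2) / 2 with hdSet
      have hd1 : 1 ≤ d := by
        have : 2 ≤ (m + 1) * (m + 2) := by nlinarith
        omega
      obtain ⟨hrm, hrd⟩ := yv_rhs_monic (T (m + 1)) hm1 d hm1d hd1
      have hprod : (T (m + 2) * T m).Monic := by rw [hrec m]; exact hrm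
      have hprodd : (T (m + 2) * T m).natDegree = 2 * d + 1 := by rw [hrec m]; exact hrd
      have hm0 : T m ≠ 0 := hm.ne_zero
      have hT2 : T (m + 2) ≠ 0 := fun h => hprod.ne_zero (by rw [h, zero_mul])
      have hmonic : (T (m + 2)).Monic := by
        have : (T (m + 2)).leadingCoeff * (T m).leadingCoeff = 1 := by
          rw [← leadingCoeff_mul]; exact hprod
        rwa [hm.leadingCoeff, mul_one] at this
      refine ⟨hmonic, ?_⟩
      have hdeq : (T (m + 2)).natDegree + (T m).natDegree = 2 * d + 1 := by
        rw [← natDegree_mul hT2 hm0, hprodd]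
      rw [hmd] at hdeq
      have e1 : (m + 2) * (m + 3) = m * m + 5 * m + 6 := by ring
      have e2 : (m + 1) * (m + 2) = m * m + 3 * m + 2 := by ring
      have e3 : m * (m + 1) = m * m + m := by ring
      rw [hdSet, e2, e3] at hdeq
      show (T (m + 2)).natDegree = (m + 2) * (m + 3) / 2
      rw [e1]
      set s := m * m
      omega
  intro n
  exact (key n).1
end

section
/- For each n ≥ 0, every monomial appearing in T_n(x) has degree congruent to n(n+1)/2 modulo 3; equivalently, T_n(x) = Σ_{j≥0} t_j(n) x^{3j+δ} with integer coefficients t_j(n), where δ = 1 if n ≡ 1 (mod 3) and δ = 0 otherwise. -/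
open Polynomial

noncomputable def zz : ℂ := Complex.exp (2 * Real.pi * Complex.I / 3)

lemma zz_prim : IsPrimitiveRoot zz 3 := Complex.isPrimitiveRoot_exp 3 (by norm_num)

lemma zz_pow3 : zz ^ 3 = 1 := zz_prim.pow_eq_one

lemma zz_ne : zz ≠ 0 := by
  intro h
  have := zz_pow3
  rw [h] at this; simp at this

lemma zz_pow_mod (k : ℕ) : zz ^ k = zz ^ (k % 3) := by
  conv_lhs => rw [← Nat.div_add_mod k 3]
  rw [pow_add, pow_mul, zz_pow3, one_pow, one_mul]

lemma coeff_comp_zzX (q : Polynomial ℂ) (k : ℕ) :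
    (q.comp (C zz * X)).coeff k = zz ^ k * q.coeff k := by
  induction q using Polynomial.induction_on' with
  | add p q hp hq => simp [add_comp, hp, hq, mul_add]
  | monomial n a =>
    rw [← C_mul_X_pow_eq_monomial, mul_comp, C_comp, pow_comp, X_comp, mul_pow, ← C_pow,
      ← mul_assoc, ← C_mul]
    rw [coeff_C_mul, coeff_X_pow, coeff_C_mul, coeff_X_pow]
    split_ifs with h
    · subst h; ring
    · ring

noncomputable def Ph (p : Polynomial ℤ) : Polynomial ℂ :=
  (p.map (Int.castRingHom ℂ)).comp (C zz * X)

lemma Ph_mul (p q : Polynomial ℤ) : Ph (p * q) = Ph p * Ph q := by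
  simp [Ph, Polynomial.map_mul, mul_comp]

lemma Ph_add (p q : Polynomial ℤ) : Ph (p + q) = Ph p + Ph q := by
  simp [Ph, Polynomial.map_add, add_comp]

lemma Ph_sub (p q : Polynomial ℤ) : Ph (p - q) = Ph p - Ph q := by
  simp [Ph, Polynomial.map_sub, sub_comp]

lemma Ph_X : Ph X = C zz * X := by simp [Ph]

lemma Ph_deriv (p : Polynomial ℤ) :
    derivative (Ph p) = C zz * Ph (derivative p) := by
  rw [Ph, Ph, derivative_comp, derivative_C_mul_X, derivative_map]

lemma zz_pow_congr {x y : ℕ} (h : x % 3 = y % 3) : zz ^ x = zz ^ y := by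
  rw [zz_pow_mod x, zz_pow_mod y, h]

def Dg (a : ℕ) (p : Polynomial ℤ) : Prop :=
  Ph p = C (zz ^ a) * p.map (Int.castRingHom ℂ)

lemma Dg_congr {a b : ℕ} {p : Polynomial ℤ} (h : Dg a p) (hab : a % 3 = b % 3) :
    Dg b p := by
  unfold Dg at h ⊢
  rw [h, zz_pow_congr hab]

lemma Dg_mul {a b : ℕ} {p q : Polynomial ℤ} (hp : Dg a p) (hq : Dg b q) :
    Dg (a + b) (p * q) := by
  unfold Dg at hp hq ⊢
  rw [Ph_mul, hp, hq, Polynomial.map_mul, pow_add, C_mul]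
  ring

lemma Dg_sq {a : ℕ} {p : Polynomial ℤ} (hp : Dg a p) : Dg (a + a) (p ^ 2) := by
  rw [pow_two]; exact Dg_mul hp hp

lemma Dg_add {a : ℕ} {p q : Polynomial ℤ} (hp : Dg a p) (hq : Dg a q) :
    Dg a (p + q) := by
  unfold Dg at hp hq ⊢
  rw [Ph_add, hp, hq, Polynomial.map_add, mul_add]

lemma Dg_sub {a : ℕ} {p q : Polynomial ℤ} (hp : Dg a p) (hq : Dg a q) :
    Dg a (p - q) := by
  unfold Dg at hp hq ⊢
  rw [Ph_sub, hp, hq, Polynomial.map_sub, mul_sub]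

lemma Dg_X : Dg 1 X := by
  unfold Dg
  simp [Ph_X]

lemma Dg_deriv {b : ℕ} {p : Polynomial ℤ} (h : Dg b p) : Dg (b + 2) (derivative p) := by
  unfold Dg at h ⊢
  have e1 : C zz * Ph (derivative p) =
      C (zz ^ b) * (derivative p).map (Int.castRingHom ℂ) := by
    rw [← Ph_deriv, h, derivative_C_mul, derivative_map]
  have hCzz : (C zz : Polynomial ℂ) ≠ 0 := by
    simpa using zz_ne
  apply mul_left_cancel₀ hCzz
  rw [e1, ← mul_assoc, ← C_mul]
  congr 1
  rw [← pow_succ']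
  rw [show b + 2 + 1 = b + 3 by ring, pow_add, zz_pow3, mul_one]

lemma Dg_iff (a : ℕ) (p : Polynomial ℤ) :
    Dg a p ↔ ∀ k, p.coeff k ≠ 0 → zz ^ k = zz ^ a := by
  unfold Dg Ph
  constructor
  · intro h k hk
    have h2 := congrArg (fun q => q.coeff k) h
    simp only [coeff_comp_zzX, coeff_C_mul, coeff_map] at h2
    have hc : ((Int.castRingHom ℂ) (p.coeff k)) ≠ 0 := by
      simpa using hk
    exact mul_right_cancel₀ hc h2
  · intro h
    ext k
    simp only [coeff_comp_zzX, coeff_C_mul, coeff_map]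
    by_cases hk : p.coeff k = 0
    · simp [hk]
    · rw [h k hk]

lemma tri_succ (n : ℕ) : (n + 1) * (n + 2) / 2 = n * (n + 1) / 2 + (n + 1) := by
  obtain ⟨m, hm⟩ := (Nat.even_mul_succ_self n).two_dvd
  have h2 : (n + 1) * (n + 2) = n * (n + 1) + 2 * (n + 1) := by ring
  omega

theorem yv_degrees_mod_three (T : ℕ → Polynomial ℤ)
    (h0 : T 0 = 1) (h1 : T 1 = X)
    (hrec : ∀ n : ℕ, T (n + 2) * T n =
      X * T (n + 1) ^ 2 + T (n + 1) * derivative (derivative (T (n + 1)))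
        - (derivative (T (n + 1))) ^ 2) :
    ∀ n k : ℕ, (T n).coeff k ≠ 0 → k % 3 = (n * (n + 1) / 2) % 3 := by
  set δ : ℕ → ℕ := fun n => n * (n + 1) / 2 % 3 with hδ
  have main : ∀ n, (Dg (δ n) (T n) ∧ T n ≠ 0) ∧
      (Dg (δ (n + 1)) (T (n + 1)) ∧ T (n + 1) ≠ 0) := by
    intro n
    induction n with
    | zero =>
      refine ⟨⟨?_, ?_⟩, ?_, ?_⟩
      · rw [h0]
        show Ph 1 = C (zz ^ δ 0) * (1 : Polynomial ℤ).map (Int.castRingHom ℂ)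
        simp [Ph, hδ]
      · rw [h0]; exact one_ne_zero
      · rw [h1]
        have : δ 1 = 1 := by simp [hδ]
        rw [this]
        exact Dg_congr Dg_X rfl
      · rw [h1]; exact X_ne_zero
    | succ m ih =>
      refine ⟨ih.2, ?_, ?_⟩
      · -- Dg (δ (m+2)) (T (m+2))
        obtain ⟨⟨hA, hA0⟩, hB, hB0⟩ := ih
        set B := T (m + 1) with hBdef
        set d1 := derivative B with hd1
        set d2 := derivative d1 with hd2
        have hD1 : Dg (δ (m + 1) + 2) d1 := Dg_deriv hB
        have hD2 : Dg (δ (m + 1) + 4) d2 := by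
          have := Dg_deriv hD1
          exact Dg_congr this (by omega)
        set b := δ (m + 1) with hb
        set a := δ m with ha
        have hRHS : Dg (2 * b + 1) (X * B ^ 2 + B * d2 - d1 ^ 2) := by
          apply Dg_sub
          · apply Dg_add
            · have := Dg_mul Dg_X (Dg_sq hB)
              exact Dg_congr this (by omega)
            · have := Dg_mul hB hD2
              exact Dg_congr this (by omega)
          · have := Dg_sq hD1
            exact Dg_congr this (by omega)
        -- key modular arithmetic
        have t1 : (m + 1) * (m + 2) / 2 = m * (m + 1) / 2 + (m + 1) := tri_succ m
        have t2 : (m + 2) * (m + 3) / 2 = (m + 1) * (m + 2) / 2 + (m + 2) :=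
          tri_succ (m + 1)
        have haval : a = m * (m + 1) / 2 % 3 := ha
        have hbval : b = (m + 1) * (m + 2) / 2 % 3 := hb
        have hcval : δ (m + 2) = (m + 2) * (m + 3) / 2 % 3 := rfl
        have harith : (δ (m + 2) + a) % 3 = (2 * b + 1) % 3 := by
          rw [haval, hbval, hcval]
          omega
        have hzc : zz ^ (δ (m + 2)) * zz ^ a = zz ^ (2 * b + 1) := by
          rw [← pow_add]
          exact zz_pow_congr harith
        -- cancellation
        have hmapA : (T m).map (Int.castRingHom ℂ) ≠ 0 :=
          (Polynomial.map_ne_zero_iff (fun x y h => by simpa using h)).mpr hA0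
        have hA' : Ph (T m) = C (zz ^ a) * (T m).map (Int.castRingHom ℂ) := hA
        have hR' : Ph (X * B ^ 2 + B * d2 - d1 ^ 2) =
            C (zz ^ (2 * b + 1)) *
              (X * B ^ 2 + B * d2 - d1 ^ 2).map (Int.castRingHom ℂ) := hRHS
        have hne : C (zz ^ a) * (T m).map (Int.castRingHom ℂ) ≠ 0 := by
          apply mul_ne_zero _ hmapA
          simpa using pow_ne_zero a zz_ne
        have hPhA_ne : Ph (T m) ≠ 0 := by rw [hA']; exact hne
        have lhs_eq : Ph (T (m + 2)) * Ph (T m) =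
            C (zz ^ (2 * b + 1)) *
              ((T (m + 2)).map (Int.castRingHom ℂ) * (T m).map (Int.castRingHom ℂ)) := by
          rw [← Ph_mul, hrec m, hR', ← hrec m, Polynomial.map_mul]
        have hcancel : Ph (T (m + 2)) * Ph (T m) =
            (C (zz ^ (δ (m + 2))) * (T (m + 2)).map (Int.castRingHom ℂ)) * Ph (T m) := by
          rw [lhs_eq, hA', ← hzc, C_mul]
          ring
        exact mul_right_cancel₀ hPhA_ne hcancel
      · -- T (m+2) ≠ 0
        obtain ⟨⟨hA, hA0⟩, hB, hB0⟩ := ih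
        set B := T (m + 1) with hBdef
        set d := B.natDegree with hd
        have hRne : X * B ^ 2 + B * derivative (derivative B) - (derivative B) ^ 2 ≠ 0 := by
          intro hzero
          have hc : (X * B ^ 2 + B * derivative (derivative B) - (derivative B) ^ 2).coeff
              (2 * d + 1) = B.leadingCoeff ^ 2 := by
            rw [coeff_sub, coeff_add]
            have c1 : (X * B ^ 2).coeff (2 * d + 1) = B.leadingCoeff ^ 2 := by
              rw [coeff_X_mul]
              have h2d : (B ^ 2).natDegree = 2 * d := by
                rw [natDegree_pow]
              rw [← h2d, coeff_natDegree, leadingCoeff_pow]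
            have c2 : (B * derivative (derivative B)).coeff (2 * d + 1) = 0 := by
              apply coeff_eq_zero_of_natDegree_lt
              calc (B * derivative (derivative B)).natDegree
                  ≤ B.natDegree + (derivative (derivative B)).natDegree :=
                    natDegree_mul_le
                _ ≤ d + d := by
                    refine Nat.add_le_add le_rfl ?_
                    calc (derivative (derivative B)).natDegree
                        ≤ (derivative B).natDegree - 1 := natDegree_derivative_le _
                      _ ≤ (derivative B).natDegree := Nat.sub_le _ _
                      _ ≤ d - 1 := natDegree_derivative_le _
                      _ ≤ d := Nat.sub_le _ _
                _ < 2 * d + 1 := by omega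
            have c3 : ((derivative B) ^ 2).coeff (2 * d + 1) = 0 := by
              apply coeff_eq_zero_of_natDegree_lt
              calc ((derivative B) ^ 2).natDegree ≤ 2 * (derivative B).natDegree :=
                    natDegree_pow_le
                _ ≤ 2 * d := by
                    have hdd : (derivative B).natDegree ≤ d := le_trans
                      (natDegree_derivative_le _) (Nat.sub_le _ _)
                    omega
                _ < 2 * d + 1 := by omega
            rw [c1, c2, c3]
            ring
          rw [hzero] at hc
          simp only [coeff_zero] at hc
          exact (pow_ne_zero 2 (leadingCoeff_ne_zero.mpr hB0)) hc.symm
        have hr := hrec m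
        intro hT0
        rw [hT0, zero_mul] at hr
        exact hRne hr.symm
  intro n k hk
  have hD := (main n).1.1
  have hz := (Dg_iff _ _).mp hD k hk
  have hz3 : zz ^ (k % 3) = zz ^ (δ n % 3) := by
    rw [← zz_pow_mod, ← zz_pow_mod, hz]
  have hlt1 : k % 3 < 3 := Nat.mod_lt _ (by norm_num)
  have hlt2 : δ n % 3 < 3 := Nat.mod_lt _ (by norm_num)
  have := zz_prim.pow_inj hlt1 hlt2 hz3
  simp only [hδ] at this ⊢
  omega
end

section
/- For all n ≥ 1, the Wronskian-type identity T_{n-1}(x) T_{n+1}'(x) − T_{n-1}'(x) T_{n+1}(x) = (2n+1) T_n(x)^2 holds. -/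
open Polynomial

theorem yv_wronskian (T : ℕ → Polynomial ℤ)
    (h0 : T 0 = 1) (h1 : T 1 = X)
    (hrec : ∀ n : ℕ, T (n + 2) * T n =
      X * T (n + 1) ^ 2 + T (n + 1) * derivative (derivative (T (n + 1)))
        - (derivative (T (n + 1))) ^ 2) :
    ∀ n : ℕ, T n * derivative (T (n + 2)) - derivative (T n) * T (n + 2) =
      (2 * (n + 1) + 1 : ℤ) • T (n + 1) ^ 2 := by
  -- all T m are nonzero
  have hne : ∀ m : ℕ, T m ≠ 0 ∧ T (m+1) ≠ 0 := by
    intro m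
    induction m with
    | zero =>
      constructor
      · rw [h0]; exact one_ne_zero
      · rw [h1]; exact X_ne_zero
    | succ m ih =>
      refine ⟨ih.2, ?_⟩
      have hv : T (m+1) ≠ 0 := ih.2
      set v := T (m+1) with hvdef
      have hE : X * v^2 + v * derivative (derivative v) - (derivative v)^2 ≠ 0 := by
        intro hE0
        have hco : (X * v^2 + v * derivative (derivative v) - (derivative v)^2).coeff
            (2*v.natDegree+1) = v.leadingCoeff^2 := by
          rw [coeff_sub, coeff_add, coeff_X_mul]
          have hb1 : (v * derivative (derivative v)).coeff (2*v.natDegree+1) = 0 := by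
            apply coeff_eq_zero_of_natDegree_lt
            calc (v * derivative (derivative v)).natDegree
                ≤ v.natDegree + (derivative (derivative v)).natDegree := natDegree_mul_le
              _ ≤ v.natDegree + v.natDegree := by
                  gcongr
                  exact ((natDegree_derivative_le _).trans (Nat.sub_le _ _)).trans
                    ((natDegree_derivative_le v).trans (Nat.sub_le _ _))
              _ < 2*v.natDegree+1 := by omega
          have hb2 : ((derivative v)^2).coeff (2*v.natDegree+1) = 0 := by
            apply coeff_eq_zero_of_natDegree_lt
            calc ((derivative v)^2).natDegree ≤ 2 * (derivative v).natDegree :=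
                natDegree_pow_le
              _ ≤ 2 * v.natDegree := by
                  gcongr
                  exact (natDegree_derivative_le v).trans (Nat.sub_le _ _)
              _ < 2*v.natDegree+1 := by omega
          have hb3 : (v^2).coeff (2*v.natDegree) = v.leadingCoeff^2 := by
            rw [← leadingCoeff_pow, ← natDegree_pow]; exact coeff_natDegree
          rw [hb1, hb2, hb3]; ring
        rw [hE0] at hco
        simp only [coeff_zero] at hco
        exact (pow_ne_zero 2 (leadingCoeff_ne_zero.mpr hv)) hco.symm
      intro h2z
      apply hE
      rw [← hrec m, h2z, zero_mul]
  -- main simultaneous induction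
  have main : ∀ k : ℕ,
      (T k * derivative (T (k+2)) - derivative (T k) * T (k+2)
          = (2*(k : Polynomial ℤ)+3) * T (k+1)^2)
    ∧ (derivative (derivative (T k)) * T (k+1)
          - 2*(derivative (T k) * derivative (T (k+1)))
          + T k * derivative (derivative (T (k+1))) = 0)
    ∧ (derivative (derivative (T (k+1))) * T (k+2)
          - 2*(derivative (T (k+1)) * derivative (T (k+2)))
          + T (k+1) * derivative (derivative (T (k+2))) = 0) := by
    intro k
    induction k with
    | zero =>
      have hT2 : T 2 = X^3 - 1 := by
        have h := hrec 0
        rw [h0, h1] at h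
        simp only [mul_one, derivative_X, derivative_one, mul_zero, one_pow, add_zero,
          zero_sub] at h
        linear_combination h
      refine ⟨?_, ?_, ?_⟩
      · rw [h0, h1, hT2]
        simp [derivative_sub, derivative_one, derivative_X_pow]
      · rw [h0, h1]
        simp
      · rw [h1, hT2]
        simp [derivative_sub, derivative_one, derivative_X_pow]
        ring
    | succ k ih =>
      obtain ⟨hWl, hHt, hHu⟩ := ih
      have hL := hrec k
      have hA := hrec (k+1)
      have hL1 := congrArg derivative hL
      have hA1 := congrArg derivative hA
      have hHu1 := congrArg derivative hHu
      simp only [derivative_mul, derivative_add, derivative_sub, derivative_pow,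
        derivative_X, derivative_zero, derivative_one, derivative_ofNat, Nat.cast_ofNat,
        map_ofNat, Nat.reduceSub, Nat.cast_one, map_one, pow_one, one_mul,
        mul_one] at hL1 hA1 hHu1
      have hL2 := congrArg derivative hL1
      have hA2 := congrArg derivative hA1
      have hHu2 := congrArg derivative hHu1
      simp only [derivative_mul, derivative_add, derivative_sub, derivative_pow,
        derivative_X, derivative_zero, derivative_one, derivative_ofNat, Nat.cast_ofNat,
        map_ofNat, Nat.reduceSub, Nat.cast_one, map_one, pow_one, one_mul,
        mul_one] at hL2 hA2 hHu2
      have key1 : T (k+1)^2 * (T (k+1) * derivative (T (k+3)) - derivative (T (k+1)) * T (k+3))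
          = T (k+1)^2 * ((2*(k : Polynomial ℤ)+5) * T (k+2)^2) := by
        linear_combination ((T (k+1))^2) * hA1 + ((-2)*(derivative (T (k+1)))*(T (k+1))) * hA + ((T (k+2))^2) * hWl + ((-2)*(derivative (T (k+2)))*(T (k+2))) * hL + ((T (k+2))^2) * hL1 + ((T (k+1))*(T (k+2))) * hHu1 + ((-1)*(derivative (T (k+1)))*(T (k+2)) + (-1)*(T (k+1))*(derivative (T (k+2)))) * hHu
      have key2 : T (k+1)^4 * (derivative (derivative (T (k+2))) * T (k+3)
          - 2*(derivative (T (k+2)) * derivative (T (k+3)))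
          + T (k+2) * derivative (derivative (T (k+3)))) = 0 := by
        linear_combination ((T (k+1))^3*(T (k+2))) * hA2 + ((-1)*(derivative (derivative (T (k+1))))*(T (k+1))^2*(T (k+2)) + (2)*(derivative (T (k+1)))^2*(T (k+1))*(T (k+2)) + (2)*(derivative (T (k+1)))*(T (k+1))^2*(derivative (T (k+2))) + (T (k+1))^3*(derivative (derivative (T (k+2))))) * hA + ((-2)*(derivative (T (k+1)))*(T (k+1))^2*(T (k+2)) + (-2)*(T (k+1))^3*(derivative (T (k+2)))) * hA1 + ((T (k+1))^2*(T (k+2))^2) * hHu2 + ((T (k+1))*(T (k+2))^3) * hL2 + ((-1)*(T (k+2))^4) * hHt + ((-2)*(derivative (T (k+1)))*(T (k+2))^3 + (-2)*(T (k+1))*(derivative (T (k+2)))*(T (k+2))^2) * hL1 + ((derivative (derivative (T (k+1))))*(T (k+2))^3 + (2)*(derivative (T (k+1)))*(derivative (T (k+2)))*(T (k+2))^2 + (-1)*(T (k+1))*(derivative (derivative (T (k+2))))*(T (k+2))^2 + (2)*(T (k+1))*(derivative (T (k+2)))^2*(T (k+2))) * hL + ((-2)*(derivative (T (k+1)))*(T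 (k+1))*(T (k+2))^2 + (-2)*(T (k+1))^2*(derivative (T (k+2)))*(T (k+2))) * hHu1 + ((derivative (T (k+1)))^2*(T (k+2))^2 + (2)*(derivative (T (k+1)))*(T (k+1))*(derivative (T (k+2)))*(T (k+2)) + (T (k+1))^2*(derivative (T (k+2)))^2 + (2)*(T (k+1))^2*(T (k+2))^2*X) * hHu
      have h2ne : T (k+1)^2 ≠ 0 := pow_ne_zero 2 (hne (k+1)).1
      have h4ne : T (k+1)^4 ≠ 0 := pow_ne_zero 4 (hne (k+1)).1
      refine ⟨?_, hHu, ?_⟩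
      · have hc := mul_left_cancel₀ h2ne key1
        show T (k+1) * derivative (T (k+3)) - derivative (T (k+1)) * T (k+3)
            = (2*((k+1 : ℕ) : Polynomial ℤ)+3) * T (k+2)^2
        push_cast
        linear_combination hc
      · have hz := (mul_eq_zero.mp key2).resolve_left h4ne
        show derivative (derivative (T (k+2))) * T (k+3)
          - 2*(derivative (T (k+2)) * derivative (T (k+3)))
          + T (k+2) * derivative (derivative (T (k+3))) = 0
        exact hz
  intro n
  have e := (main n).1
  rw [smul_eq_C_mul]
  simp only [map_add, map_mul, map_ofNat, map_natCast, map_one]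
  linear_combination e
end

section
/- Let t_0(n) denote the coefficient of the lowest-degree term of T_n(x) (the constant term if n ≡ 0,2 mod 3, the coefficient of x if n ≡ 1 mod 3). Then for all m ≥ 1, t_0(3m−1)·t_0(3m+1) = (6m+1)·t_0(3m)^2. -/
/-!
Let `ω` be a primitive cube root of unity. Along the recurrence,
`T n (ω x) = ω ^ w(n) * T n x` with `w(n) ≡ n (n + 1) / 2 = deg T n (mod 3)`, so `T n` only has
monomials `x ^ j` with `j ≡ w(n) (mod 3)`. With this sparsity, the coefficient of `x` in
`T (3m+1) T (3m-1) = x T (3m)² + T (3m) T (3m)'' - T (3m)'²` reads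
`t₀(3m+1) t₀(3m-1) = t₀(3m)² + 6 t₀(3m) [x³] T (3m)`.
The missing `[x³] T (3m) = m t₀(3m)` is the constant term of a third-order bilinear identity
between `T (3m-1)` and `T (3m)`; that identity, together with the Hirota equation
`D²(T (n+1) · T n) = 0`, propagates along the recurrence.
The lowest coefficients divided by on the way are nonzero by the same coefficient comparisons.
-/

open Polynomial

namespace Polynomial

variable {R : Type*} [CommRing R]

noncomputable def todaRHS (p : R[X]) : R[X] :=
  X * p ^ 2 + p * derivative (derivative p) - derivative p ^ 2

lemma coeff_zero_todaRHS (p : R[X]) :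
    (todaRHS p).coeff 0 = 2 * p.coeff 0 * p.coeff 2 - p.coeff 1 ^ 2 := by
  simp [todaRHS, coeff_derivative, sq]
  ring

lemma coeff_one_todaRHS (p : R[X]) :
    (todaRHS p).coeff 1 =
      p.coeff 0 ^ 2 + 6 * p.coeff 0 * p.coeff 3 - 2 * p.coeff 1 * p.coeff 2 := by
  simp [todaRHS, coeff_derivative, sq, mul_coeff_one]
  ring

lemma map_todaRHS {S : Type*} [CommRing S] (f : R →+* S) (p : R[X]) :
    (todaRHS p).map f = todaRHS (p.map f) := by
  simp [todaRHS, derivative_map]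

lemma todaRHS_ne_zero [IsDomain R] {p : R[X]} (hp : p ≠ 0) : todaRHS p ≠ 0 := by
  set d := p.natDegree
  have hder : ∀ q : R[X], q.natDegree ≤ d → (derivative q).natDegree ≤ d :=
    fun q hq => (natDegree_derivative_le q).trans (by omega)
  have hlow : ∀ q r : R[X], q.natDegree ≤ d → r.natDegree ≤ d →
      (q * r).coeff (d + d + 1) = 0 := fun q r hq hr =>
    coeff_eq_zero_of_natDegree_lt (natDegree_mul_le.trans_lt (by omega))
  have htop : (todaRHS p).coeff (d + d + 1) = p.leadingCoeff * p.leadingCoeff := by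
    rw [todaRHS, coeff_sub, coeff_add, coeff_X_mul, sq, sq, coeff_mul_degree_add_degree,
      hlow _ _ le_rfl (hder _ (hder _ le_rfl)), hlow _ _ (hder _ le_rfl) (hder _ le_rfl),
      add_zero, sub_zero]
  intro h
  rw [h, coeff_zero] at htop
  exact mul_self_ne_zero.mpr (leadingCoeff_ne_zero.mpr hp) htop.symm

def HasScalingWeight (ζ : R) (c : ℕ) (p : R[X]) : Prop :=
  p.comp (C ζ * X) = C (ζ ^ c) * p

section ScalingWeight

variable {ζ : R} {c d : ℕ} {p q : R[X]}

lemma hasScalingWeight_one : HasScalingWeight ζ 0 (1 : R[X]) := by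
  simp [HasScalingWeight]

lemma hasScalingWeight_X : HasScalingWeight ζ 1 (X : R[X]) := by
  simp [HasScalingWeight]

namespace HasScalingWeight

lemma mul (hp : HasScalingWeight ζ c p) (hq : HasScalingWeight ζ d q) :
    HasScalingWeight ζ (c + d) (p * q) := by
  rw [HasScalingWeight, mul_comp, hp, hq, pow_add, C_mul]
  ring

lemma add (hp : HasScalingWeight ζ c p) (hq : HasScalingWeight ζ c q) :
    HasScalingWeight ζ c (p + q) := by
  rw [HasScalingWeight, add_comp, hp, hq, mul_add]

lemma sub (hp : HasScalingWeight ζ c p) (hq : HasScalingWeight ζ c q) :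
    HasScalingWeight ζ c (p - q) := by
  rw [HasScalingWeight, sub_comp, hp, hq, mul_sub]

lemma of_modEq {N : ℕ} (hζ : ζ ^ N = 1) (h : c ≡ d [MOD N]) (hp : HasScalingWeight ζ c p) :
    HasScalingWeight ζ d p := by
  rwa [HasScalingWeight, ← pow_eq_pow_of_modEq h hζ]

lemma derivative {k : ℕ} (hζ : ζ ^ (k + 1) = 1) (hp : HasScalingWeight ζ c p) :
    HasScalingWeight ζ (c + k) (Polynomial.derivative p) := by
  have h := congrArg Polynomial.derivative hp
  rw [derivative_comp, derivative_mul, derivative_C, derivative_mul, derivative_C, derivative_X]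
    at h
  have hC : C (ζ ^ k) * C ζ = 1 := by rw [← C_mul, ← pow_succ, hζ, C_1]
  rw [HasScalingWeight, pow_add, C_mul]
  linear_combination C (ζ ^ k) * h - (Polynomial.derivative p).comp (C ζ * Polynomial.X) * hC

lemma coeff_eq_zero [IsDomain R] {k : ℕ} (hp : HasScalingWeight ζ c p) (hk : ζ ^ k ≠ ζ ^ c) :
    p.coeff k = 0 := by
  have h := congrArg (coeff · k) hp
  simp only [comp_C_mul_X_coeff, coeff_C_mul] at h
  exact (mul_eq_zero.mp (by linear_combination h : p.coeff k * (ζ ^ k - ζ ^ c) = 0)).resolve_right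
    (sub_ne_zero.mpr hk)

lemma of_mul [IsDomain R] (hζ : ζ ≠ 0) (hq0 : q ≠ 0) (hq : HasScalingWeight ζ d q)
    (hpq : HasScalingWeight ζ (c + d) (p * q)) : HasScalingWeight ζ c p := by
  rw [HasScalingWeight, mul_comp, hq, pow_add, C_mul] at hpq
  refine mul_right_cancel₀ (mul_ne_zero (C_ne_zero.mpr (pow_ne_zero d hζ)) hq0) ?_
  linear_combination hpq

lemma todaRHS (hζ : ζ ^ 3 = 1) (hp : HasScalingWeight ζ c p) :
    HasScalingWeight ζ (2 * c + 1) (Polynomial.todaRHS p) := by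
  have hp'' : HasScalingWeight ζ (c + 2 + 2) (Polynomial.derivative (Polynomial.derivative p)) :=
    (hp.derivative hζ).derivative hζ
  rw [Polynomial.todaRHS, sq, sq]
  refine ((hasScalingWeight_X.mul (hp.mul hp)).of_modEq hζ ?_ |>.add ?_).sub ?_
  · unfold Nat.ModEq; omega
  · exact (hp.mul hp'').of_modEq hζ (by unfold Nat.ModEq; omega)
  · exact ((hp.derivative hζ).mul (hp.derivative hζ)).of_modEq hζ (by unfold Nat.ModEq; omega)

end HasScalingWeight

end ScalingWeight

/-- The Hirota derivative `D_x² (f · g)`. -/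
noncomputable def hirotaD2 (f g : R[X]) : R[X] :=
  derivative (derivative f) * g - 2 * derivative f * derivative g + f * derivative (derivative g)

/-- A third-order bilinear equation satisfied by `(T n, T (n + 1))` with `ν = 2 n + 2`. -/
noncomputable def yvBilinear3 (ν : R) (f g : R[X]) : R[X] :=
  f * derivative (derivative (derivative g)) - 2 * derivative f * derivative (derivative g)
    + derivative (derivative f) * derivative g + 2 * X * (f * derivative g - derivative f * g)
    - C ν * (f * g)

lemma coeff_zero_yvBilinear3 (ν : R) (f g : R[X]) :
    (yvBilinear3 ν f g).coeff 0 = 6 * f.coeff 0 * g.coeff 3 - 4 * f.coeff 1 * g.coeff 2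
      + 2 * f.coeff 2 * g.coeff 1 - ν * f.coeff 0 * g.coeff 0 := by
  simp [yvBilinear3, coeff_derivative]
  ring

lemma coeff_one_yvBilinear3 (ν : R) (f g : R[X]) :
    (yvBilinear3 ν f g).coeff 1 = 24 * f.coeff 0 * g.coeff 4 - 6 * f.coeff 1 * g.coeff 3
      - 4 * f.coeff 2 * g.coeff 2 + 6 * f.coeff 3 * g.coeff 1 + (2 - ν) * f.coeff 0 * g.coeff 1
      - (2 + ν) * f.coeff 1 * g.coeff 0 := by
  simp [yvBilinear3, coeff_derivative, mul_coeff_one, mul_assoc]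
  ring

section Hirota

variable [IsDomain R] {ν : R} {a b c : R[X]}

/- In both lemmas below, `a ^ 3` times the new identity is a combination of the recurrence
`c * a = todaRHS b`, its first two derivatives, and the old identities and their derivatives. -/

lemma hirotaD2_eq_zero_of_todaRHS (ha : a ≠ 0) (hrec : c * a = todaRHS b)
    (h2 : hirotaD2 b a = 0) (h3 : yvBilinear3 ν a b = 0) : hirotaD2 c b = 0 := by
  simp only [todaRHS, sq] at hrec
  unfold hirotaD2 at h2 ⊢
  unfold yvBilinear3 at h3
  have hrec' := congrArg derivative hrec
  have hrec'' := congrArg derivative hrec'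
  have h2' := congrArg derivative h2
  have h3' := congrArg derivative h3
  simp only [derivative_mul, derivative_add, derivative_sub, derivative_X, derivative_one,
    derivative_C, derivative_ofNat, derivative_zero] at hrec' hrec'' h2' h3'
  refine (pow_eq_zero_iff three_ne_zero).not.mpr ha |> (mul_eq_zero.mp ?_).resolve_left
  linear_combination (b * a ^ 2) * hrec''
    - 2 * (b * a * derivative a + derivative b * a ^ 2) * hrec'
    + (2 * b * derivative a ^ 2 - b * a * derivative (derivative a)
      + 2 * derivative b * a * derivative a + derivative (derivative b) * a ^ 2) * hrec
    + (X * a * b ^ 2 + a * derivative b ^ 2 + derivative a * b * derivative b) * h2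
    - (a * b * derivative b) * h2'
    - (a * b * derivative b + derivative a * b ^ 2) * h3
    + (a * b ^ 2) * h3'

lemma yvBilinear3_eq_zero_of_todaRHS (ha : a ≠ 0) (hrec : c * a = todaRHS b)
    (h2 : hirotaD2 b a = 0) (h3 : yvBilinear3 ν a b = 0) (h2new : hirotaD2 c b = 0) :
    yvBilinear3 (ν + 2) b c = 0 := by
  simp only [todaRHS, sq] at hrec
  unfold hirotaD2 at h2 h2new
  unfold yvBilinear3 at h3 ⊢
  have hrec' := congrArg derivative hrec
  have hrec'' := congrArg derivative hrec'
  have h2' := congrArg derivative h2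
  have h3' := congrArg derivative h3
  have h2new' := congrArg derivative h2new
  simp only [derivative_mul, derivative_add, derivative_sub, derivative_X, derivative_one,
    derivative_C, derivative_ofNat, derivative_zero] at hrec' hrec'' h2' h3' h2new'
  refine (pow_eq_zero_iff three_ne_zero).not.mpr ha |> (mul_eq_zero.mp ?_).resolve_left
  rw [C_add, C_ofNat]
  linear_combination a ^ 3 * h2new'
    - (derivative b * a ^ 2) * hrec''
    + 2 * (derivative b * a * derivative a + derivative (derivative b) * a ^ 2 + X * b * a ^ 2)
      * hrec'
    + (-2 * derivative b * derivative a ^ 2 + derivative b * a * derivative (derivative a)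
      - 2 * derivative (derivative b) * a * derivative a - 2 * X * b * a * derivative a
      - derivative (derivative (derivative b)) * a ^ 2 - 2 * X * derivative b * a ^ 2
      - C ν * b * a ^ 2 - 2 * b * a ^ 2) * hrec
    - (2 * X * a * b * derivative b + a * derivative b * derivative (derivative b)
      + derivative a * derivative b ^ 2) * h2
    + (a * derivative b ^ 2) * h2'
    + (X * a * b ^ 2 + a * b * derivative (derivative b) + derivative a * b * derivative b) * h3
    - (a * b * derivative b) * h3'

end Hirota

end Polynomial

structure IsYablonskiiVorobev {R : Type*} [CommRing R] (T : ℕ → R[X]) : Prop where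
  zero : T 0 = 1
  one : T 1 = X
  recurrence : ∀ n, T (n + 2) * T n = todaRHS (T (n + 1))

/-- `yvWeight n ≡ n (n + 1) / 2 = deg T n (mod 3)`. -/
def yvWeight (n : ℕ) : ℕ := if n % 3 = 1 then 1 else 0

namespace IsYablonskiiVorobev

section Domain

variable {R : Type*} [CommRing R] {T : ℕ → R[X]}

lemma map {S : Type*} [CommRing S] (hT : IsYablonskiiVorobev T) (f : R →+* S) :
    IsYablonskiiVorobev (fun n => (T n).map f) where
  zero := by simp [hT.zero]
  one := by simp [hT.one]
  recurrence n := by simp only [← Polynomial.map_mul, hT.recurrence n, map_todaRHS]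

lemma ne_zero [IsDomain R] (hT : IsYablonskiiVorobev T) : ∀ n, T n ≠ 0
  | 0 => hT.zero ▸ one_ne_zero
  | 1 => hT.one ▸ X_ne_zero
  | n + 2 => left_ne_zero_of_mul <| hT.recurrence n ▸ todaRHS_ne_zero (hT.ne_zero (n + 1))

lemma hasScalingWeight [IsDomain R] (hT : IsYablonskiiVorobev T) {ζ : R} (hζ : ζ ^ 3 = 1)
    (n : ℕ) : HasScalingWeight ζ (yvWeight n) (T n) := by
  have hζ0 : ζ ≠ 0 := by rintro rfl; simp at hζ
  suffices ∀ n, HasScalingWeight ζ (yvWeight n) (T n) ∧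
      HasScalingWeight ζ (yvWeight (n + 1)) (T (n + 1)) from (this n).1
  intro n
  induction n with
  | zero => exact ⟨hT.zero ▸ hasScalingWeight_one, hT.one ▸ hasScalingWeight_X⟩
  | succ n ih =>
    refine ⟨ih.2, HasScalingWeight.of_mul hζ0 (hT.ne_zero n) ih.1 ?_⟩
    have hw : 2 * yvWeight (n + 1) + 1 ≡ yvWeight (n + 2) + yvWeight n [MOD 3] := by
      unfold yvWeight Nat.ModEq; split_ifs <;> omega
    exact hT.recurrence n ▸ (ih.2.todaRHS hζ).of_modEq hζ hw

lemma hirotaD2_and_yvBilinear3_eq_zero [IsDomain R] (hT : IsYablonskiiVorobev T) (n : ℕ) :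
    hirotaD2 (T (n + 1)) (T n) = 0 ∧ yvBilinear3 (2 * n + 2 : R) (T n) (T (n + 1)) = 0 := by
  induction n with
  | zero => simp [hirotaD2, yvBilinear3, hT.zero, hT.one, C_ofNat]
  | succ n ih =>
    have h2 := hirotaD2_eq_zero_of_todaRHS (hT.ne_zero n) (hT.recurrence n) ih.1 ih.2
    refine ⟨h2, ?_⟩
    convert yvBilinear3_eq_zero_of_todaRHS (hT.ne_zero n) (hT.recurrence n) ih.1 ih.2 h2 using 2
    push_cast
    ring

end Domain

section Int

variable {T : ℕ → ℤ[X]}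

lemma coeff_eq_zero (hT : IsYablonskiiVorobev T) {n j : ℕ} (hj : ¬ j ≡ yvWeight n [MOD 3]) :
    (T n).coeff j = 0 := by
  obtain ⟨ω, hω⟩ : ∃ ω : ℂ, IsPrimitiveRoot ω 3 :=
    ⟨_, Complex.isPrimitiveRoot_exp 3 (by norm_num)⟩
  have hS := (hT.map (Int.castRingHom ℂ)).hasScalingWeight hω.pow_eq_one n
  have hpow : ω ^ j ≠ ω ^ yvWeight n := by
    rwa [Ne, (hω.isOfFinOrder three_ne_zero).pow_eq_pow_iff_modEq, ← hω.eq_orderOf]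
  simpa using hS.coeff_eq_zero hpow

lemma coeff_eq_zero_of_mod_three_eq_one (hT : IsYablonskiiVorobev T) {n j : ℕ}
    (hn : n % 3 = 1) (hj : j % 3 ≠ 1) : (T n).coeff j = 0 :=
  hT.coeff_eq_zero (by unfold yvWeight Nat.ModEq; simp [hn]; omega)

lemma coeff_eq_zero_of_mod_three_ne_one (hT : IsYablonskiiVorobev T) {n j : ℕ}
    (hn : n % 3 ≠ 1) (hj : j % 3 ≠ 0) : (T n).coeff j = 0 :=
  hT.coeff_eq_zero (by unfold yvWeight Nat.ModEq; simp [hn]; omega)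

lemma coeff_zero_mul_coeff_zero (hT : IsYablonskiiVorobev T) (k : ℕ) :
    (T (3 * k + 2)).coeff 0 * (T (3 * k)).coeff 0 = -(T (3 * k + 1)).coeff 1 ^ 2 := by
  have h := congrArg (coeff · 0) (hT.recurrence (3 * k))
  simp only [mul_coeff_zero, coeff_zero_todaRHS,
    hT.coeff_eq_zero_of_mod_three_eq_one (n := 3 * k + 1) (j := 0) (by omega) (by omega)] at h
  linear_combination h

lemma coeff_zero_three_mul_add_two_ne_zero (hT : IsYablonskiiVorobev T) (k : ℕ)
    (h1 : (T (3 * k + 1)).coeff 1 ≠ 0) : (T (3 * k + 2)).coeff 0 ≠ 0 :=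
  left_ne_zero_of_mul <| by
    rw [hT.coeff_zero_mul_coeff_zero k]
    exact neg_ne_zero.mpr (pow_ne_zero 2 h1)

lemma coeff_three_three_mul_add_two (hT : IsYablonskiiVorobev T) (k : ℕ)
    (h1 : (T (3 * k + 1)).coeff 1 ≠ 0) :
    (T (3 * k + 2)).coeff 3 = -(k + 1) * (T (3 * k + 2)).coeff 0 := by
  have h := congrArg (coeff · 1) (hT.hirotaD2_and_yvBilinear3_eq_zero (3 * k + 1)).2
  have hz (j : ℕ) (hj : j % 3 ≠ 1) : (T (3 * k + 1)).coeff j = 0 :=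
    hT.coeff_eq_zero_of_mod_three_eq_one (by omega) hj
  simp only [coeff_one_yvBilinear3, coeff_zero, hz 0 (by omega), hz 2 (by omega),
    hz 3 (by omega)] at h
  push_cast at h
  refine mul_left_cancel₀ (mul_ne_zero (by norm_num : (6 : ℤ) ≠ 0) h1) ?_
  linear_combination -h

lemma coeff_three_three_mul_add_three (hT : IsYablonskiiVorobev T) (k : ℕ)
    (h2 : (T (3 * k + 2)).coeff 0 ≠ 0) :
    (T (3 * k + 3)).coeff 3 = (k + 1) * (T (3 * k + 3)).coeff 0 := by
  have h := congrArg (coeff · 0) (hT.hirotaD2_and_yvBilinear3_eq_zero (3 * k + 2)).2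
  have hz (j : ℕ) (hj : j % 3 ≠ 0) : (T (3 * k + 2)).coeff j = 0 :=
    hT.coeff_eq_zero_of_mod_three_ne_one (by omega) hj
  simp only [coeff_zero_yvBilinear3, coeff_zero, hz 1 (by omega), hz 2 (by omega)] at h
  push_cast at h
  refine mul_left_cancel₀ (mul_ne_zero (by norm_num : (6 : ℤ) ≠ 0) h2) ?_
  linear_combination h

lemma coeff_zero_mul_coeff_one (hT : IsYablonskiiVorobev T) (k : ℕ)
    (h1 : (T (3 * k + 1)).coeff 1 ≠ 0) :
    (T (3 * k + 3)).coeff 0 * (T (3 * k + 1)).coeff 1 =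
      -(6 * k + 5) * (T (3 * k + 2)).coeff 0 ^ 2 := by
  have h := congrArg (coeff · 1) (hT.recurrence (3 * k + 1))
  simp only [mul_coeff_one, coeff_one_todaRHS,
    hT.coeff_eq_zero_of_mod_three_eq_one (n := 3 * k + 1) (j := 0) (by omega) (by omega),
    hT.coeff_eq_zero_of_mod_three_ne_one (n := 3 * k + 2) (j := 1) (by omega) (by omega)] at h
  linear_combination h + 6 * (T (3 * k + 2)).coeff 0 * hT.coeff_three_three_mul_add_two k h1

lemma coeff_one_mul_coeff_zero (hT : IsYablonskiiVorobev T) (k : ℕ)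
    (h2 : (T (3 * k + 2)).coeff 0 ≠ 0) :
    (T (3 * k + 4)).coeff 1 * (T (3 * k + 2)).coeff 0 =
      (6 * k + 7) * (T (3 * k + 3)).coeff 0 ^ 2 := by
  have h := congrArg (coeff · 1) (hT.recurrence (3 * k + 2))
  simp only [mul_coeff_one, coeff_one_todaRHS,
    hT.coeff_eq_zero_of_mod_three_eq_one (n := 3 * k + 4) (j := 0) (by omega) (by omega),
    hT.coeff_eq_zero_of_mod_three_ne_one (n := 3 * k + 3) (j := 1) (by omega) (by omega)] at h
  linear_combination h + 6 * (T (3 * k + 3)).coeff 0 * hT.coeff_three_three_mul_add_three k h2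

lemma coeff_one_three_mul_add_one_ne_zero (hT : IsYablonskiiVorobev T) :
    ∀ k, (T (3 * k + 1)).coeff 1 ≠ 0
  | 0 => by simp [hT.one]
  | k + 1 => by
    have h1 := hT.coeff_one_three_mul_add_one_ne_zero k
    have h2 := hT.coeff_zero_three_mul_add_two_ne_zero k h1
    have h3 : (T (3 * k + 3)).coeff 0 ≠ 0 := left_ne_zero_of_mul <| by
      rw [hT.coeff_zero_mul_coeff_one k h1]
      exact mul_ne_zero (by omega) (pow_ne_zero 2 h2)
    rw [show 3 * (k + 1) + 1 = 3 * k + 4 by ring]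
    exact left_ne_zero_of_mul <| by
      rw [hT.coeff_one_mul_coeff_zero k h2]
      exact mul_ne_zero (by omega) (pow_ne_zero 2 h3)

end Int

end IsYablonskiiVorobev

theorem yv_t0_relation_one (T : ℕ → Polynomial ℤ)
    (h0 : T 0 = 1) (h1 : T 1 = X)
    (hrec : ∀ n : ℕ, T (n + 2) * T n =
      X * T (n + 1) ^ 2 + T (n + 1) * derivative (derivative (T (n + 1)))
        - (derivative (T (n + 1))) ^ 2) :
    ∀ m : ℕ, 1 ≤ m →
      (T (3 * m - 1)).coeff 0 * (T (3 * m + 1)).coeff 1 =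
        (6 * (m : ℤ) + 1) * ((T (3 * m)).coeff 0) ^ 2 := by
  intro m hm
  obtain ⟨k, rfl⟩ : ∃ k, m = k + 1 := ⟨m - 1, by omega⟩
  have hT : IsYablonskiiVorobev T := ⟨h0, h1, hrec⟩
  have key := hT.coeff_one_mul_coeff_zero k
    (hT.coeff_zero_three_mul_add_two_ne_zero k (hT.coeff_one_three_mul_add_one_ne_zero k))
  rw [show 3 * (k + 1) - 1 = 3 * k + 2 by omega, show 3 * (k + 1) + 1 = 3 * k + 4 by ring,
    show 3 * (k + 1) = 3 * k + 3 by ring]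
  push_cast
  linear_combination key
end

section
/- Let t_0(n) denote the lowest-degree coefficient of T_n(x) as above. Then for all m ≥ 0, t_0(3m+2)·t_0(3m) = −t_0(3m+1)^2. -/
open Polynomial

private def yvD : ℕ → ℕ
  | 0 => 0
  | n + 1 => yvD n + (n + 1)

private lemma yvD_rec (n : ℕ) : yvD (n + 2) + yvD n = 2 * yvD (n + 1) + 1 := by
  simp only [yvD]; omega

private lemma yvD_succ (n : ℕ) : yvD (n + 1) = yvD n + (n + 1) := rfl

private lemma yvD_mod (m : ℕ) : yvD (3 * m + 1) % 3 = 1 := by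
  induction m with
  | zero => simp [yvD]
  | succ k ih =>
    have h : 3 * (k + 1) + 1 = ((3 * k + 1) + 1 + 1) + 1 := by omega
    rw [h, yvD_succ, yvD_succ, yvD_succ]
    omega

theorem yv_t0_relation_three (T : ℕ → Polynomial ℤ)
    (h0 : T 0 = 1) (h1 : T 1 = X)
    (hrec : ∀ n : ℕ, T (n + 2) * T n =
      X * T (n + 1) ^ 2 + T (n + 1) * derivative (derivative (T (n + 1)))
        - (derivative (T (n + 1))) ^ 2) :
    ∀ m : ℕ,
      (T (3 * m + 2)).coeff 0 * (T (3 * m)).coeff 0 =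
        -((T (3 * m + 1)).coeff 1) ^ 2 := by
  intro m
  -- Setup: map to ℂ and pick a primitive cube root of unity
  set f : ℤ →+* ℂ := Int.castRingHom ℂ with hf
  set U : ℕ → Polynomial ℂ := fun n => (T n).map f with hU
  have hprim : IsPrimitiveRoot (Complex.exp (2 * ↑Real.pi * Complex.I / (3 : ℕ))) 3 :=
    Complex.isPrimitiveRoot_exp 3 (by norm_num)
  set ω : ℂ := Complex.exp (2 * ↑Real.pi * Complex.I / (3 : ℕ)) with hωdef
  have hω3 : ω ^ 3 = 1 := hprim.pow_eq_one
  have hωne1 : ω ≠ 1 := hprim.ne_one (by norm_num)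
  have hωmod : ∀ k : ℕ, ω ^ k = ω ^ (k % 3) := by
    intro k
    conv_lhs => rw [← Nat.div_add_mod k 3]
    rw [pow_add, pow_mul, hω3, one_pow, one_mul]
  have hsc : ∀ a c : ℕ, a % 3 = c % 3 → ω ^ a = ω ^ c := by
    intro a c h; rw [hωmod a, hωmod c, h]
  have hU0 : U 0 = 1 := by rw [hU]; simp [h0]
  have hU1 : U 1 = X := by rw [hU]; simp [h1]
  have hUrec : ∀ n, U (n + 2) * U n =
      X * U (n + 1) ^ 2 + U (n + 1) * derivative (derivative (U (n + 1)))
        - (derivative (U (n + 1))) ^ 2 := by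
    intro n
    have h := congrArg (Polynomial.map f) (hrec n)
    rw [hU]
    simpa only [Polynomial.map_mul, Polynomial.map_add, Polynomial.map_sub,
      Polynomial.map_pow, Polynomial.map_X, Polynomial.derivative_map] using h
  -- Nonvanishing of the right-hand side
  have hRHSne : ∀ P : Polynomial ℂ, P ≠ 0 →
      X * P ^ 2 + P * derivative (derivative P) - (derivative P) ^ 2 ≠ 0 := by
    intro P hP hzero
    have hA : (X * P ^ 2).coeff (2 * P.natDegree + 1) = P.leadingCoeff * P.leadingCoeff := by
      rw [pow_two, coeff_X_mul, two_mul, coeff_mul_degree_add_degree]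
    have hB : (P * derivative (derivative P)).coeff (2 * P.natDegree + 1) = 0 := by
      apply coeff_eq_zero_of_natDegree_lt
      have h1' : (P * derivative (derivative P)).natDegree ≤
          P.natDegree + (derivative (derivative P)).natDegree := natDegree_mul_le
      have h2' := natDegree_derivative_le (derivative P)
      have h3' := natDegree_derivative_le P
      omega
    have hC : ((derivative P) ^ 2).coeff (2 * P.natDegree + 1) = 0 := by
      apply coeff_eq_zero_of_natDegree_lt
      have h1' : ((derivative P) ^ 2).natDegree ≤
          (derivative P).natDegree + (derivative P).natDegree := by
        rw [pow_two]; exact natDegree_mul_le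
      have h2' := natDegree_derivative_le P
      omega
    have h := congrArg (fun p : Polynomial ℂ => p.coeff (2 * P.natDegree + 1)) hzero
    simp only [coeff_add, coeff_sub, hA, hB, hC, coeff_zero, add_zero, sub_zero] at h
    exact hP (leadingCoeff_eq_zero.mp (mul_self_eq_zero.mp h))
  have hUnz : ∀ n, U n ≠ 0 := by
    have key : ∀ n, U n ≠ 0 ∧ U (n + 1) ≠ 0 := by
      intro n
      induction n with
      | zero =>
        refine ⟨by rw [hU0]; exact one_ne_zero, by rw [hU1]; exact X_ne_zero⟩
      | succ k ih =>
        refine ⟨ih.2, ?_⟩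
        show U (k + 2) ≠ 0
        intro hc
        have hne := hRHSne (U (k + 1)) ih.2
        rw [← hUrec k, hc, zero_mul] at hne
        exact hne rfl
    exact fun n => (key n).1
  have hωne0 : ω ≠ 0 := by
    intro h; rw [h] at hω3; simp at hω3
  -- derivative-comp helper
  have hderiv : ∀ p : Polynomial ℂ,
      (derivative p).comp (C ω * X) = C (ω ^ 2) * derivative (p.comp (C ω * X)) := by
    intro p
    have hq : derivative (C ω * X) = C ω := by simp
    rw [derivative_comp, hq, ← mul_assoc, ← C_mul,
      show (ω ^ 2 * ω : ℂ) = 1 by rw [← pow_succ]; exact hω3, C_1, one_mul]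
  -- the scaling property
  have hscale : ∀ n, (U n).comp (C ω * X) = C (ω ^ yvD n) * U n := by
    have main : ∀ n, (U n).comp (C ω * X) = C (ω ^ yvD n) * U n ∧
        (U (n + 1)).comp (C ω * X) = C (ω ^ yvD (n + 1)) * U (n + 1) := by
      intro n
      induction n with
      | zero =>
        constructor
        · rw [hU0]; simp [yvD]
        · rw [hU1]; simp [yvD]
      | succ k ih =>
        refine ⟨ih.2, ?_⟩
        show (U (k + 2)).comp (C ω * X) = C (ω ^ yvD (k + 2)) * U (k + 2)
        set b := yvD (k + 1) with hb
        have hP' : (derivative (U (k + 1))).comp (C ω * X) =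
            C (ω ^ (2 + b)) * derivative (U (k + 1)) := by
          rw [hderiv, ih.2, derivative_C_mul, ← mul_assoc, ← C_mul, ← pow_add]
        have hP'' : (derivative (derivative (U (k + 1)))).comp (C ω * X) =
            C (ω ^ (2 + (2 + b))) * derivative (derivative (U (k + 1))) := by
          rw [hderiv, hP', derivative_C_mul, ← mul_assoc, ← C_mul, ← pow_add]
        have hw1 : (C (ω ^ b) * C (ω ^ (2 + (2 + b))) : Polynomial ℂ) = C (ω ^ (2 * b + 1)) := by
          rw [← C_mul, ← pow_add]
          exact congrArg C (hsc _ _ (by omega))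
        have hw2 : (C (ω ^ (2 + b)) * C (ω ^ (2 + b)) : Polynomial ℂ) = C (ω ^ (2 * b + 1)) := by
          rw [← C_mul, ← pow_add]
          exact congrArg C (hsc _ _ (by omega))
        have hw3 : (C ω * C (ω ^ b) * C (ω ^ b) : Polynomial ℂ) = C (ω ^ (2 * b + 1)) := by
          rw [mul_assoc, ← C_mul, ← C_mul, ← pow_add, ← pow_succ']
          exact congrArg C (hsc _ _ (by omega))
        have hcomp : (U (k + 2)).comp (C ω * X) * (U k).comp (C ω * X) =
            C (ω ^ (2 * b + 1)) * (U (k + 2) * U k) := by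
          rw [← mul_comp, hUrec k]
          simp only [add_comp, sub_comp, mul_comp, pow_comp, X_comp, ih.2, hP', hP'']
          linear_combination (X * U (k + 1) ^ 2) * hw3 +
            (U (k + 1) * derivative (derivative (U (k + 1)))) * hw1 -
            ((derivative (U (k + 1))) ^ 2) * hw2
        have hww : (C (ω ^ yvD (k + 2)) * C (ω ^ yvD k) : Polynomial ℂ) =
            C (ω ^ (2 * b + 1)) := by
          rw [← C_mul, ← pow_add, hb, ← yvD_rec k]
        have hE : (U (k + 2)).comp (C ω * X) * ((U k).comp (C ω * X)) =
            (C (ω ^ yvD (k + 2)) * U (k + 2)) * ((U k).comp (C ω * X)) := by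
          rw [hcomp, ih.1]
          linear_combination (-(U (k + 2) * U k)) * hww
        have hckne : (U k).comp (C ω * X) ≠ 0 := by
          rw [ih.1]
          exact mul_ne_zero (fun hc => by
            have := C_eq_zero.mp hc
            exact pow_ne_zero _ hωne0 this) (hUnz k)
        exact mul_right_cancel₀ hckne hE
    exact fun n => (main n).1
  -- coefficient 0 of T (3m+1) vanishes
  have hzero1 : (T (3 * m + 1)).coeff 0 = 0 := by
    have h := congrArg (fun p : Polynomial ℂ => p.coeff 0) (hscale (3 * m + 1))
    simp only [coeff_zero_eq_eval_zero, eval_comp, eval_mul, eval_C, eval_X, mul_zero] at h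
    rw [hωmod, yvD_mod m, pow_one] at h
    have h2 : (ω - 1) * eval 0 (U (3 * m + 1)) = 0 := by linear_combination -h
    have h3 : eval 0 (U (3 * m + 1)) = 0 := by
      rcases mul_eq_zero.mp h2 with h' | h'
      · exact absurd (sub_eq_zero.mp h') hωne1
      · exact h'
    have h4 : ((T (3 * m + 1)).coeff 0 : ℂ) = 0 := by
      rw [← coeff_zero_eq_eval_zero] at h3
      rw [hU] at h3
      simpa [coeff_map] using h3
    exact_mod_cast h4
  -- final computation: coefficient 0 of the recurrence at n = 3m
  have hfin := congrArg (fun p : Polynomial ℤ => p.coeff 0) (hrec (3 * m))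
  simp only [pow_two, mul_coeff_zero, coeff_add, coeff_sub, coeff_X_zero, zero_mul,
    coeff_derivative, hzero1, zero_add, Nat.cast_zero, mul_one] at hfin
  rw [hfin]
  ring
end

section
/- For every n ≥ 1, det(1/(j−2i+n+1)!)_{1≤i,j≤n} = 1 / Π_{k=1}^{n} (2k−1)!!, where 1/l! is interpreted as 0 when l < 0. -/
/-!
Reversing the order of both rows and columns does not change the determinant and turns the
entries into `1/(2i - j + 1)!` (indices from `0`). Multiplying row `i` by `(2i+1)!` then gives
the falling factorial `(2i+1)(2i)⋯(2i-j+2)`, the value at `2i+1` of the monic polynomial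
`X(X-1)⋯(X-j+1)` of degree `j`; such a matrix has the determinant of the Vandermonde matrix
of `1, 3, …, 2n-1`, namely `∏_{k<n} 2^k k!`. Since `(2k+1)! = (2k+1)‼ · 2^k k!`, the claim
follows.
-/

open Finset Matrix

theorem Nat.factorial_two_mul_add_one_eq (k : ℕ) :
    (2 * k + 1).factorial = (2 * k + 1).doubleFactorial * (2 ^ k * k.factorial) := by
  rw [Nat.factorial_eq_mul_doubleFactorial, Nat.doubleFactorial_two_mul]

theorem factorial_mul_inv_factorial_sub_eq_descFactorial {K : Type*} [Field K] [CharZero K]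
    (m k : ℕ) :
    (m.factorial : K) * (if _ : (0 : ℤ) ≤ (m : ℤ) - k
        then (((m : ℤ) - k).toNat.factorial : K)⁻¹ else 0) =
      m.descFactorial k := by
  split_ifs with h
  · have hk : k ≤ m := by omega
    have hfac : ((m - k).factorial : K) ≠ 0 := Nat.cast_ne_zero.mpr (Nat.factorial_ne_zero _)
    rw [show ((m : ℤ) - k).toNat = m - k by omega, ← Nat.factorial_mul_descFactorial hk,
      Nat.cast_mul, mul_right_comm, mul_inv_cancel₀ hfac, one_mul]
  · rw [mul_zero, eq_comm, Nat.cast_eq_zero, Nat.descFactorial_eq_zero_iff_lt]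
    omega

namespace Matrix

variable {R : Type*} [CommRing R] {n : ℕ}

theorem det_vandermonde_const_mul (c : R) (v : Fin n → R) :
    (vandermonde fun i ↦ c * v i).det = (∏ i : Fin n, c ^ (i : ℕ)) * (vandermonde v).det := by
  have : vandermonde (fun i ↦ c * v i) =
      vandermonde v * diagonal fun j : Fin n ↦ c ^ (j : ℕ) := by
    ext i j
    simp [vandermonde_apply, mul_pow, mul_comm]
  rw [this, det_mul, det_diagonal, mul_comm]

theorem det_vandermonde_natCast :
    (vandermonde fun i : Fin n ↦ (i : R)).det = ∏ k ∈ range n, (k.factorial : R) := by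
  cases n with
  | zero => simp
  | succ n =>
    rw [det_vandermonde_id_eq_superFactorial, ← Nat.prod_range_succ_factorial]
    push_cast
    rfl

theorem det_vandermonde_arithmetic (a d : R) :
    (vandermonde fun i : Fin n ↦ d * i + a).det = ∏ k ∈ range n, d ^ k * k.factorial := by
  rw [det_vandermonde_add (fun i : Fin n ↦ d * i), det_vandermonde_const_mul,
    det_vandermonde_natCast, Fin.prod_univ_eq_prod_range (d ^ ·), prod_mul_distrib]

end Matrix

theorem det_inverse_factorials_general (n : ℕ)
    (M : Matrix (Fin n) (Fin n) ℚ)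
    (hM : ∀ i j : Fin n,
      M i j = if h : (0 : ℤ) ≤ ((j : ℕ) + 1 : ℤ) - 2 * ((i : ℕ) + 1) + n + 1
        then ((((((j : ℕ) + 1 : ℤ) - 2 * ((i : ℕ) + 1) + n + 1).toNat).factorial : ℚ))⁻¹
        else 0) :
    M.det = ((∏ k ∈ Finset.range n, (Nat.doubleFactorial (2 * k + 1) : ℚ)))⁻¹ := by
  have hentry : ∀ i j : Fin n, ((2 * (i : ℕ) + 1).factorial : ℚ) * M i.rev j.rev =
      (descPochhammer ℚ j).eval ((2 * (i : ℕ) + 1 : ℕ) : ℚ) := by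
    intro i j
    have hz : ((j.rev : ℕ) + 1 : ℤ) - 2 * ((i.rev : ℕ) + 1) + n + 1 =
        (2 * (i : ℕ) + 1 : ℕ) - (j : ℕ) := by
      simp only [Fin.val_rev]
      omega
    rw [hM, hz, factorial_mul_inv_factorial_sub_eq_descFactorial,
      descPochhammer_eval_eq_descFactorial]
  have hdet : (∏ k ∈ range n, ((2 * k + 1).factorial : ℚ)) * M.det =
      ∏ k ∈ range n, (2 : ℚ) ^ k * k.factorial :=
    calc (∏ k ∈ range n, ((2 * k + 1).factorial : ℚ)) * M.det
        = (∏ i : Fin n, ((2 * (i : ℕ) + 1).factorial : ℚ)) *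
            (M.submatrix Fin.revPerm Fin.revPerm).det := by
          rw [Fin.prod_univ_eq_prod_range (fun k ↦ ((2 * k + 1).factorial : ℚ)),
            det_submatrix_equiv_self]
      _ = (of fun i j : Fin n ↦
            (descPochhammer ℚ j).eval ((2 * (i : ℕ) + 1 : ℕ) : ℚ)).det := by
          rw [← det_mul_column]
          simp only [submatrix_apply, Fin.revPerm_apply, hentry]
      _ = (vandermonde fun i : Fin n ↦ 2 * (i : ℚ) + 1).det := by
          rw [← det_eval_matrixOfPolynomials_eq_det_vandermonde _ _
            (fun j ↦ descPochhammer_natDegree ℚ j) (fun j ↦ monic_descPochhammer ℚ j)]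
          push_cast
          rfl
      _ = ∏ k ∈ range n, (2 : ℚ) ^ k * k.factorial := det_vandermonde_arithmetic 1 2
  have hsplit : ∏ k ∈ range n, ((2 * k + 1).factorial : ℚ) =
      (∏ k ∈ range n, ((2 * k + 1).doubleFactorial : ℚ)) *
        ∏ k ∈ range n, (2 : ℚ) ^ k * k.factorial := by
    rw [← prod_mul_distrib]
    push_cast [Nat.factorial_two_mul_add_one_eq]
    rfl
  have hne : (∏ k ∈ range n, (2 : ℚ) ^ k * k.factorial) ≠ 0 := by positivity
  rw [hsplit] at hdet
  refine eq_inv_of_mul_eq_one_left (mul_left_cancel₀ hne ?_)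
  linear_combination hdet

/-- `det(1/(j-2i+n+1)!)_{1 ≤ i,j ≤ n} = 1 / ∏_{k=1}^{n} (2k-1)!!`, where `1/l! = 0` for `l < 0`. -/
theorem det_inverse_factorials (n : ℕ) (hn : 1 ≤ n)
    (M : Matrix (Fin n) (Fin n) ℚ)
    (hM : ∀ i j : Fin n,
      M i j = if h : (0 : ℤ) ≤ ((j : ℕ) + 1 : ℤ) - 2 * ((i : ℕ) + 1) + n + 1
        then ((((((j : ℕ) + 1 : ℤ) - 2 * ((i : ℕ) + 1) + n + 1).toNat).factorial : ℚ))⁻¹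
        else 0) :
    M.det = ((∏ k ∈ Finset.range n, (Nat.doubleFactorial (2 * k + 1) : ℚ)))⁻¹ :=
  det_inverse_factorials_general n M hM
end

section
/- Define τ_n(x) = det(h_{j−2i+n+1}(x))_{1≤i,j≤n}, where h_k(x) is given by exp(xλ+λ³/3) = Σ h_k(x)λ^k and h_k = 0 for k < 0. Then τ_n(x) has degree exactly n(n+1)/2 and leading coefficient 1/Π_{k=1}^{n}(2k−1)!!. -/
open Polynomial PowerSeries Finset

/-!
Reversing the order of rows and columns turns `τ_n` into `det (h_{2i+1-j})_{0 ≤ i,j < n}`.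
Since `h_k` has degree `k` and leading coefficient `1/k!`, multiplying column `j` by `x^j`
bounds the degree of every entry of row `i` by `2i+1`, so `x^{n(n-1)/2} τ_n` has degree at most
`n²` and its coefficient of `x^{n²}` is `det (1/(2i+1-j)!)`. Writing `1/(a-j)! = a(a-1)⋯(a-j+1)/a!`
makes this a Vandermonde determinant in the nodes `2i+1`, equal to
`∏ 2^k k!/(2k+1)! = ∏ 1/(2k+1)!!`, which is nonzero.
-/

theorem Polynomial.coeff_prod_sum_of_natDegree_le {R ι : Type*} [CommSemiring R] (s : Finset ι)
    (f : ι → R[X]) (d : ι → ℕ) (h : ∀ i ∈ s, (f i).natDegree ≤ d i) :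
    (∏ i ∈ s, f i).coeff (∑ i ∈ s, d i) = ∏ i ∈ s, (f i).coeff (d i) := by
  induction s using Finset.cons_induction with
  | empty => simp
  | cons a s ha ih =>
    have hs : ∀ i ∈ s, (f i).natDegree ≤ d i := fun i hi => h i (mem_cons_of_mem hi)
    rw [prod_cons, sum_cons, prod_cons, coeff_mul_add_eq_of_natDegree_le (h a (mem_cons_self a s))
      ((natDegree_prod_le s f).trans (sum_le_sum hs)), ih hs]

namespace PowerSeries

variable {R : Type*} [CommSemiring R] {f g : PowerSeries R[X]}

theorem natDegree_coeff_mul_le (hf : ∀ k, (coeff k f).natDegree ≤ k)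
    (hg : ∀ k, (coeff k g).natDegree ≤ k) (n : ℕ) : (coeff n (f * g)).natDegree ≤ n := by
  rw [coeff_mul]
  refine natDegree_sum_le_of_forall_le _ _ fun p hp => natDegree_mul_le.trans ?_
  rw [← mem_antidiagonal.mp hp]
  exact add_le_add (hf _) (hg _)

theorem coeff_coeff_mul_self (hf : ∀ k, (coeff k f).natDegree ≤ k)
    (hg : ∀ k, (coeff k g).natDegree ≤ k) (n : ℕ) :
    (coeff n (f * g)).coeff n =
      ∑ p ∈ antidiagonal n, (coeff p.1 f).coeff p.1 * (coeff p.2 g).coeff p.2 := by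
  rw [coeff_mul, finsetSum_coeff]
  refine sum_congr rfl fun p hp => ?_
  rw [← mem_antidiagonal.mp hp]
  exact coeff_mul_add_eq_of_natDegree_le (hf _) (hg _)

end PowerSeries

-- `exp(xλ)` and `exp(λ³/3)` as power series in `λ` with coefficients in `ℚ[x]`.
noncomputable def expSeriesX : PowerSeries ℚ[X] :=
  PowerSeries.mk fun n => Polynomial.C ((1 : ℚ) / n.factorial) * Polynomial.X ^ n

noncomputable def expSeriesCubeThird : PowerSeries ℚ[X] :=
  PowerSeries.mk fun n =>
    if n % 3 = 0 then Polynomial.C ((1 : ℚ) / (3 ^ (n / 3) * (n / 3).factorial)) else 0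

theorem natDegree_coeff_expSeriesX_le (k : ℕ) : (coeff k expSeriesX).natDegree ≤ k := by
  rw [expSeriesX, coeff_mk]
  exact natDegree_C_mul_X_pow_le _ _

theorem natDegree_coeff_expSeriesCubeThird_le (k : ℕ) :
    (coeff k expSeriesCubeThird).natDegree ≤ k := by
  rw [expSeriesCubeThird, coeff_mk]
  split_ifs
  exacts [(natDegree_C _).trans_le k.zero_le, natDegree_zero.trans_le k.zero_le]

section

variable {h : ℕ → ℚ[X]}

theorem natDegree_le_of_mk_eq (hgen : PowerSeries.mk h = expSeriesX * expSeriesCubeThird)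
    (k : ℕ) : (h k).natDegree ≤ k := by
  have := natDegree_coeff_mul_le natDegree_coeff_expSeriesX_le
    natDegree_coeff_expSeriesCubeThird_le k
  rwa [← hgen, coeff_mk] at this

theorem coeff_self_of_mk_eq (hgen : PowerSeries.mk h = expSeriesX * expSeriesCubeThird)
    (k : ℕ) : (h k).coeff k = (k.factorial : ℚ)⁻¹ := by
  have := coeff_coeff_mul_self natDegree_coeff_expSeriesX_le
    natDegree_coeff_expSeriesCubeThird_le k
  rw [← hgen, coeff_mk] at this
  rw [this, sum_eq_single (k, 0)]
  · simp [expSeriesX, expSeriesCubeThird]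
  · rintro ⟨a, b⟩ hab hne
    have hb : b ≠ 0 := by rintro rfl; simp_all
    rw [expSeriesCubeThird, coeff_mk]
    split_ifs <;> simp [Polynomial.coeff_C, hb]
  · simp

end

theorem prod_range_odd_sub {K : Type*} [CommRing K] (m : ℕ) :
    ∏ k ∈ range m, (((2 * m + 1 : ℕ) : K) - (2 * k + 1 : ℕ)) = 2 ^ m * (m.factorial : K) :=
  calc ∏ k ∈ range m, (((2 * m + 1 : ℕ) : K) - (2 * k + 1 : ℕ))
      = ∏ k ∈ range m, 2 * (((m - 1 - k : ℕ) : K) + 1) := prod_congr rfl fun k hk => by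
        have := mem_range.mp hk
        rw [Nat.sub_sub, Nat.cast_sub (by omega)]
        push_cast
        ring
    _ = ∏ k ∈ range m, 2 * ((k : K) + 1) := prod_range_reflect (fun k => 2 * ((k : K) + 1)) m
    _ = 2 ^ m * (m.factorial : K) := by
        rw [prod_mul_distrib, prod_const, card_range, ← prod_range_add_one_eq_factorial]
        push_cast
        rfl

theorem inv_factorial_mul_two_pow_mul_factorial {K : Type*} [Field K] [CharZero K] (k : ℕ) :
    (((2 * k + 1).factorial : K))⁻¹ * (2 ^ k * (k.factorial : K)) =
      (((2 * k + 1).doubleFactorial : K))⁻¹ := by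
  rw [Nat.factorial_eq_mul_doubleFactorial, Nat.doubleFactorial_two_mul]
  have : ((2 * k + 1).doubleFactorial : K) ≠ 0 :=
    Nat.cast_ne_zero.mpr (Nat.doubleFactorial_pos _).ne'
  have : (k.factorial : K) ≠ 0 := Nat.cast_ne_zero.mpr k.factorial_ne_zero
  push_cast
  field_simp

namespace Matrix

variable {ι R : Type*} [CommRing R]

/-- The matrix `(p_{x_i - c_j})_{i,j}`, with the convention `p_k = 0` for `k < 0`. -/
def jacobiTrudi {S : Type*} [Zero S] (p : ℕ → S) (x c : ι → ℕ) : Matrix ι ι S :=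
  of fun i j => if c j ≤ x i then p (x i - c j) else 0

variable {p : ℕ → R[X]}

theorem natDegree_X_pow_mul_jacobiTrudi_le (hp : ∀ k, (p k).natDegree ≤ k) (x c : ι → ℕ)
    (i j : ι) : (Polynomial.X ^ c j * jacobiTrudi p x c i j).natDegree ≤ x i := by
  rw [jacobiTrudi, of_apply]
  split_ifs
  · exact natDegree_mul_le.trans <| by grw [natDegree_X_pow_le, hp]; omega
  · simp

variable [Fintype ι] [DecidableEq ι]

theorem natDegree_det_le_of_natDegree_le {M : Matrix ι ι R[X]} {r : ι → ℕ}
    (hM : ∀ i j, (M i j).natDegree ≤ r i) : M.det.natDegree ≤ ∑ i, r i := by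
  rw [← det_transpose, det_apply']
  refine natDegree_sum_le_of_forall_le _ _ fun σ _ => ?_
  rw [← C_eq_intCast]
  exact (natDegree_C_mul_le _ _).trans <|
    (natDegree_prod_le _ _).trans <| sum_le_sum fun i _ => hM i (σ i)

theorem coeff_det_sum_of_natDegree_le {M : Matrix ι ι R[X]} {r : ι → ℕ}
    (hM : ∀ i j, (M i j).natDegree ≤ r i) :
    M.det.coeff (∑ i, r i) = (of fun i j => (M i j).coeff (r i)).det := by
  rw [← det_transpose, det_apply', ← det_transpose, det_apply', finsetSum_coeff]
  refine sum_congr rfl fun σ _ => ?_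
  simp only [transpose_apply, of_apply]
  rw [← C_eq_intCast, Polynomial.coeff_C_mul,
    coeff_prod_sum_of_natDegree_le _ _ _ fun i _ => hM i (σ i)]

theorem X_pow_sum_mul_det (M : Matrix ι ι R[X]) (c : ι → ℕ) :
    Polynomial.X ^ (∑ j, c j) * M.det = (of fun i j => Polynomial.X ^ c j * M i j).det := by
  rw [det_mul_row, prod_pow_eq_pow_sum]

theorem natDegree_X_pow_mul_det_jacobiTrudi_le (hp : ∀ k, (p k).natDegree ≤ k) (x c : ι → ℕ) :
    (Polynomial.X ^ (∑ j, c j) * (jacobiTrudi p x c).det).natDegree ≤ ∑ i, x i := by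
  rw [X_pow_sum_mul_det]
  exact natDegree_det_le_of_natDegree_le (natDegree_X_pow_mul_jacobiTrudi_le hp x c)

theorem coeff_X_pow_mul_det_jacobiTrudi (hp : ∀ k, (p k).natDegree ≤ k) (x c : ι → ℕ) :
    (Polynomial.X ^ (∑ j, c j) * (jacobiTrudi p x c).det).coeff (∑ i, x i) =
      (jacobiTrudi (fun k => (p k).coeff k) x c).det := by
  rw [X_pow_sum_mul_det]
  refine (coeff_det_sum_of_natDegree_le (natDegree_X_pow_mul_jacobiTrudi_le hp x c)).trans ?_
  congr 1
  ext i j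
  simp only [jacobiTrudi, of_apply]
  split_ifs with h
  · have := Polynomial.coeff_X_pow_mul (p (x i - c j)) (c j) (x i - c j)
    rwa [Nat.sub_add_cancel h] at this
  · simp

theorem det_jacobiTrudi_inv_factorial {K : Type*} [Field K] [CharZero K] {n : ℕ}
    (x : Fin n → ℕ) :
    (jacobiTrudi (fun k => ((k.factorial : K))⁻¹) x (fun j => j)).det =
      (∏ i, ((x i).factorial : K))⁻¹ * (vandermonde fun i => (x i : K)).det := by
  have hentry : ∀ i j : Fin n, jacobiTrudi (fun k => ((k.factorial : K))⁻¹) x (fun j => j) i j =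
      ((x i).factorial : K)⁻¹ * (descPochhammer K j).eval (x i : K) := by
    intro i j
    rw [jacobiTrudi, of_apply, descPochhammer_eval_eq_descFactorial]
    split_ifs with hj
    · rw [← Nat.factorial_mul_descFactorial hj]
      have : ((x i).descFactorial j : K) ≠ 0 := by
        exact_mod_cast (Nat.descFactorial_pos.mpr hj).ne'
      push_cast
      field_simp
    · rw [Nat.descFactorial_eq_zero_iff_lt.mpr (by omega)]
      simp
  rw [show jacobiTrudi _ x _ = of fun i j => _ from ext hentry]
  refine (det_mul_column (fun i => ((x i).factorial : K)⁻¹)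
    (of fun i j : Fin n => (descPochhammer K j).eval (x i : K))).trans ?_
  rw [prod_inv_distrib, det_eval_matrixOfPolynomials_eq_det_vandermonde _ _
    (fun j => descPochhammer_natDegree K j) (fun j => monic_descPochhammer K j)]

theorem det_vandermonde_odd {K : Type*} [CommRing K] (n : ℕ) :
    (vandermonde fun i : Fin n => ((2 * i + 1 : ℕ) : K)).det =
      ∏ j : Fin n, 2 ^ (j : ℕ) * ((j : ℕ).factorial : K) := by
  rw [det_vandermonde, prod_comm' (t' := univ) (s' := fun j => Iio j) (by simp)]
  refine prod_congr rfl fun j _ => ?_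
  rw [← prod_range_odd_sub, ← Nat.Iio_eq_range, ← Fin.map_valEmbedding_Iio, prod_map]
  rfl

theorem det_jacobiTrudi_inv_factorial_odd {K : Type*} [Field K] [CharZero K] (n : ℕ) :
    (jacobiTrudi (fun k => ((k.factorial : K))⁻¹) (fun i : Fin n => 2 * i + 1)
      (fun j => j)).det = (∏ k ∈ range n, ((2 * k + 1).doubleFactorial : K))⁻¹ := by
  rw [det_jacobiTrudi_inv_factorial, det_vandermonde_odd, ← prod_inv_distrib,
    ← prod_mul_distrib, Fin.prod_univ_eq_prod_range
      (fun k => (((2 * k + 1).factorial : K))⁻¹ * (2 ^ k * (k.factorial : K))),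
    ← prod_inv_distrib]
  exact prod_congr rfl fun k _ => inv_factorial_mul_two_pow_mul_factorial k

theorem det_tau_eq_det_jacobiTrudi {S : Type*} [CommRing S] (h : ℕ → S) (n : ℕ) :
    Matrix.det (Matrix.of fun i j : Fin n =>
      if _ : (0 : ℤ) ≤ ((j : ℕ) + 1 : ℤ) - 2 * ((i : ℕ) + 1) + n + 1
        then h ((((j : ℕ) + 1 : ℤ) - 2 * ((i : ℕ) + 1) + n + 1).toNat)
        else 0) =
      (jacobiTrudi h (fun i : Fin n => 2 * i + 1) (fun j => j)).det := by
  rw [← det_submatrix_equiv_self (Fin.revPerm (n := n))]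
  congr 1
  ext i j
  simp only [jacobiTrudi, submatrix_apply, of_apply, Fin.revPerm_apply, Fin.val_rev]
  have hi : (i : ℕ) + 1 ≤ n := i.isLt
  have hj : (j : ℕ) + 1 ≤ n := j.isLt
  push_cast [Nat.cast_sub hi, Nat.cast_sub hj]
  split_ifs <;> first | omega | rfl | (congr 1; omega)

end Matrix

theorem Fin.sum_two_mul_add_one (n : ℕ) :
    ∑ i : Fin n, (2 * (i : ℕ) + 1) = ∑ i : Fin n, (i : ℕ) + n * (n + 1) / 2 := by
  have hsucc : ∑ i : Fin n, ((i : ℕ) + 1) = n * (n + 1) / 2 := by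
    have := sum_range_succ' (fun i => i) n
    rw [sum_range_id, Nat.add_sub_cancel, add_zero] at this
    rw [Fin.sum_univ_eq_sum_range (· + 1), ← this, Nat.mul_comm]
  rw [← hsucc, ← sum_add_distrib]
  exact sum_congr rfl fun i _ => by ring

theorem tau_degree_leadingCoeff (h : ℕ → Polynomial ℚ)
    (hgen : PowerSeries.mk h =
      (PowerSeries.mk fun n => Polynomial.C ((1 : ℚ) / n.factorial) * Polynomial.X ^ n) *
      (PowerSeries.mk fun n =>
        if n % 3 = 0 then Polynomial.C ((1 : ℚ) / (3 ^ (n / 3) * (n / 3).factorial)) else 0))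
    (n : ℕ) (τ : Polynomial ℚ)
    (hτ : τ = Matrix.det (Matrix.of fun i j : Fin n =>
      if h0 : (0 : ℤ) ≤ ((j : ℕ) + 1 : ℤ) - 2 * ((i : ℕ) + 1) + n + 1
        then h ((((j : ℕ) + 1 : ℤ) - 2 * ((i : ℕ) + 1) + n + 1).toNat)
        else 0)) :
    τ.natDegree = n * (n + 1) / 2 ∧
      τ.leadingCoeff = ((∏ k ∈ Finset.range n, (Nat.doubleFactorial (2 * k + 1) : ℚ)))⁻¹ := by
  set x : Fin n → ℕ := fun i => 2 * i + 1
  set c : Fin n → ℕ := fun j => j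
  have hdeg := natDegree_le_of_mk_eq hgen
  rw [Matrix.det_tau_eq_det_jacobiTrudi] at hτ
  have hcoeff : (Polynomial.X ^ (∑ j, c j) * τ).coeff (∑ i, x i) =
      (∏ k ∈ range n, ((2 * k + 1).doubleFactorial : ℚ))⁻¹ := by
    rw [hτ, Matrix.coeff_X_pow_mul_det_jacobiTrudi hdeg]
    simp only [coeff_self_of_mk_eq hgen]
    exact Matrix.det_jacobiTrudi_inv_factorial_odd n
  have hD : (∏ k ∈ range n, ((2 * k + 1).doubleFactorial : ℚ))⁻¹ ≠ 0 := by positivity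
  have hτ0 : τ ≠ 0 := by
    rintro rfl
    rw [mul_zero, coeff_zero] at hcoeff
    exact hD hcoeff.symm
  have hnat : (Polynomial.X ^ (∑ j, c j) * τ).natDegree = ∑ i, x i :=
    natDegree_eq_of_le_of_coeff_ne_zero
      (hτ ▸ Matrix.natDegree_X_pow_mul_det_jacobiTrudi_le hdeg x c) (hcoeff ▸ hD)
  have hsum : ∑ i, x i = ∑ j, c j + n * (n + 1) / 2 := Fin.sum_two_mul_add_one n
  constructor
  · have := natDegree_X_pow_mul (∑ j, c j) hτ0
    omega
  · calc τ.leadingCoeff = (Polynomial.X ^ (∑ j, c j) * τ).leadingCoeff := by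
          rw [leadingCoeff_mul, leadingCoeff_X_pow, one_mul]
      _ = _ := by rw [leadingCoeff, hnat, hcoeff]
end
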